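/- arXiv:1405.4465 — 5 statements merged into one kernel-verified Lean document; each statement's English description precedes it below -/
import Mathlib

section
/- Let F_x, F_y, F_xx, F_xy, F_yy, a_2, b_2 be real numbers with (F_x, F_y) ≠ (0,0), and set a_1 = −F_y and b_1 = F_x. If F_x·a_2 + F_y·b_2 + F_xx·a_1² + 2·F_xy·a_1·b_1 + F_yy·b_1² = 0, then |a_1·b_2 − a_2·b_1| / (a_1² + b_1²)^{3/2} = |F_xx·F_y² − 2·F_xy·F_x·F_y + F_yy·F_x²| / (F_x² + F_y²)^{3/2}. -/
theorem curvature_regular_point_plane_curve_general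
    (Fx Fy Fxx Fxy Fyy a2 b2 : ℝ)
    (a1 b1 : ℝ) (ha1 : a1 = -Fy) (hb1 : b1 = Fx)
    (hC2 : Fx * a2 + Fy * b2 + Fxx * a1 ^ 2 + 2 * Fxy * a1 * b1 + Fyy * b1 ^ 2 = 0) :
    |a1 * b2 - a2 * b1| / (a1 ^ 2 + b1 ^ 2) ^ ((3 : ℝ) / 2)
      = |Fxx * Fy ^ 2 - 2 * Fxy * Fx * Fy + Fyy * Fx ^ 2|
          / (Fx ^ 2 + Fy ^ 2) ^ ((3 : ℝ) / 2) := by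
  rw [ha1, hb1] at hC2 ⊢
  -- the cross product with the tangent `(-Fy, Fx)` is `-(Fx * a2 + Fy * b2)`, which `C₂ = 0`
  -- expresses through the Hessian
  have hcross : -Fy * b2 - a2 * Fx = Fxx * Fy ^ 2 - 2 * Fxy * Fx * Fy + Fyy * Fx ^ 2 := by
    linear_combination -hC2
  rw [hcross, neg_sq, add_comm (Fy ^ 2)]

/-- Theorem 1 of the paper (algebraic content): at a regular point of a plane
algebraic curve, the curvature computed by Algorithm 1 from the quadratic
parametric curve with tangent `(-F_y, F_x)` and second-order contact condition
`C₂ = 0` agrees with the classical implicit-curve curvature formula. -/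
theorem curvature_regular_point_plane_curve
    (Fx Fy Fxx Fxy Fyy a2 b2 : ℝ) (hgrad : (Fx, Fy) ≠ (0, 0))
    (a1 b1 : ℝ) (ha1 : a1 = -Fy) (hb1 : b1 = Fx)
    (hC2 : Fx * a2 + Fy * b2 + Fxx * a1 ^ 2 + 2 * Fxy * a1 * b1 + Fyy * b1 ^ 2 = 0) :
    |a1 * b2 - a2 * b1| / (a1 ^ 2 + b1 ^ 2) ^ ((3 : ℝ) / 2)
      = |Fxx * Fy ^ 2 - 2 * Fxy * Fx * Fy + Fyy * Fx ^ 2|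
          / (Fx ^ 2 + Fy ^ 2) ^ ((3 : ℝ) / 2) :=
  curvature_regular_point_plane_curve_general Fx Fy Fxx Fxy Fyy a2 b2 a1 b1 ha1 hb1 hC2
end

section
/- Let F : ℝ² → ℝ be twice continuously differentiable, let P ∈ ℝ² satisfy the gradient condition ∇F(P) ≠ 0, write F_x, F_y, F_xx, F_xy, F_yy for the values of the partial derivatives of F at P, and let w = (w_1, w_2) ∈ ℝ². Define the quadratic curve r : ℝ → ℝ² by r(t) = P + t·(−F_y, F_x) + (t²/2)·w. If the second derivative of the composite t ↦ F(r(t)) vanishes at t = 0, then the curvature of r at t = 0, namely |(−F_y)·w_2 − w_1·F_x| / (F_x² + F_y²)^{3/2}, equals |F_xx·F_y² − 2·F_xy·F_x·F_y + F_yy·F_x²| / (F_x² + F_y²)^{3/2}. -/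
/-!
Differentiating `F ∘ r` twice at `0` gives `C₂ = D²F(P)(v, v) + DF(P) w` with `v = (-F_y, F_x)`.
By symmetry of the Hessian, `D²F(P)(v, v) = F_xx F_y² - 2 F_xy F_x F_y + F_yy F_x²`, while
`DF(P) w = w₁ F_x + w₂ F_y`; so `C₂ = 0` says precisely that the numerator `-F_y w₂ - w₁ F_x` of
the curvature of `r` equals the implicit-curve numerator `Tan(F)·H(F)·Tan(F)ᵀ`.
-/

open ContinuousLinearMap

section SecondDerivative

variable {E G : Type*} [NormedAddCommGroup E] [NormedSpace ℝ E]
  [NormedAddCommGroup G] [NormedSpace ℝ G]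

theorem hasDerivAt_quadratic_curve (P v w : E) (t : ℝ) :
    HasDerivAt (fun t : ℝ => P + t • v + (t ^ 2 / 2) • w) (v + t • w) t := by
  have hlin := ((hasDerivAt_id t).smul_const v).const_add P
  have hquad := ((hasDerivAt_pow 2 t).div_const 2).smul_const w
  convert hlin.add hquad using 1
  · rfl
  · simp

theorem deriv_deriv_comp_quadratic_curve_zero {F : E → G} (hF : ContDiff ℝ 2 F) (P v w : E) :
    deriv (deriv fun t : ℝ => F (P + t • v + (t ^ 2 / 2) • w)) 0
      = fderiv ℝ (fderiv ℝ F) P v v + fderiv ℝ F P w := by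
  set r : ℝ → E := fun t => P + t • v + (t ^ 2 / 2) • w
  have hF' : Differentiable ℝ (fderiv ℝ F) :=
    (hF.fderiv_right (m := 1) le_rfl).differentiable one_ne_zero
  have hfirst : deriv (fun t => F (r t)) = fun t => fderiv ℝ F (r t) (v + t • w) :=
    funext fun t => ((hF.differentiable two_ne_zero (r t)).hasFDerivAt.comp_hasDerivAt t
      (hasDerivAt_quadratic_curve P v w t)).deriv
  have hr0 : r 0 = P := by simp [r]
  have hDF := (hF' (r 0)).hasFDerivAt.comp_hasDerivAt 0 (hasDerivAt_quadratic_curve P v w 0)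
  rw [hr0, zero_smul, add_zero] at hDF
  have hvel : HasDerivAt (fun t : ℝ => v + t • w) w 0 := by
    simpa using ((hasDerivAt_id (0 : ℝ)).smul_const w).const_add v
  rw [hfirst]
  exact (hDF.clm_apply hvel).deriv.trans (by simp [hr0, add_comm])

theorem fderiv_fderiv_apply_const {F : E → G} {P : E}
    (hF : DifferentiableAt ℝ (fderiv ℝ F) P) (e e' : E) :
    fderiv ℝ (fun p => fderiv ℝ F p e) P e' = fderiv ℝ (fderiv ℝ F) P e' e := by
  simp [fderiv_clm_apply hF (differentiableAt_const e)]

end SecondDerivative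

theorem ContinuousLinearMap.apply_eq_fst_smul_add_snd_smul {R M : Type*} [Semiring R]
    [TopologicalSpace R] [AddCommMonoid M] [Module R M] [TopologicalSpace M]
    (L : R × R →L[R] M) (a : R × R) :
    L a = a.1 • L (1, 0) + a.2 • L (0, 1) := by
  rw [← map_smul, ← map_smul, ← map_add]
  simp

theorem bilin_apply_self_eq_of_symm {B : ℝ × ℝ →L[ℝ] ℝ × ℝ →L[ℝ] ℝ} (hB : ∀ a b, B a b = B b a)
    (a b : ℝ) :
    B (a, b) (a, b) = a ^ 2 * B (1, 0) (1, 0) + 2 * a * b * B (1, 0) (0, 1)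
      + b ^ 2 * B (0, 1) (0, 1) := by
  simp only [B.apply_eq_fst_smul_add_snd_smul (a, b), add_apply, smul_apply,
    (B _).apply_eq_fst_smul_add_snd_smul (a, b), smul_eq_mul, hB (0, 1) (1, 0)]
  ring

theorem curvature_regular_point_implicit_curve_general
    (F : ℝ × ℝ → ℝ) (hF : ContDiff ℝ 2 F)
    (P : ℝ × ℝ)
    (Fx Fy Fxx Fxy Fyy : ℝ)
    (hFx : Fx = fderiv ℝ F P (1, 0))
    (hFy : Fy = fderiv ℝ F P (0, 1))
    (hFxx : Fxx = fderiv ℝ (fun p => fderiv ℝ F p (1, 0)) P (1, 0))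
    (hFxy : Fxy = fderiv ℝ (fun p => fderiv ℝ F p (0, 1)) P (1, 0))
    (hFyy : Fyy = fderiv ℝ (fun p => fderiv ℝ F p (0, 1)) P (0, 1))
    (w : ℝ × ℝ)
    (r : ℝ → ℝ × ℝ)
    (hr : r = fun t => P + t • ((-Fy, Fx) : ℝ × ℝ) + (t ^ 2 / 2) • w)
    (hC2 : deriv (deriv (fun t => F (r t))) 0 = 0) :
    |(-Fy) * w.2 - w.1 * Fx| / (Fx ^ 2 + Fy ^ 2) ^ ((3 : ℝ) / 2)
      = |Fxx * Fy ^ 2 - 2 * Fxy * Fx * Fy + Fyy * Fx ^ 2|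
          / (Fx ^ 2 + Fy ^ 2) ^ ((3 : ℝ) / 2) := by
  have hDF : DifferentiableAt ℝ (fderiv ℝ F) P :=
    (hF.fderiv_right (m := 1) le_rfl).differentiable one_ne_zero P
  have hsymm : IsSymmSndFDerivAt ℝ F P := hF.contDiffAt.isSymmSndFDerivAt (by simp)
  rw [fderiv_fderiv_apply_const hDF] at hFxx hFxy hFyy
  rw [hr, deriv_deriv_comp_quadratic_curve_zero hF, bilin_apply_self_eq_of_symm hsymm,
    (fderiv ℝ F P).apply_eq_fst_smul_add_snd_smul w, ← hFx, ← hFy, ← hFxx, ← hFxy, ← hFyy] at hC2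
  simp only [smul_eq_mul] at hC2
  congr 2
  linarith

/-- Theorem 1 of the paper for a C² function: the quadratic parametric curve
through a regular point `P` of the implicit curve `F = 0` with tangent
`(-F_y, F_x)` and second-order contact (`C₂ = 0`) has the curvature given by
the implicit-curve formula `|Tan(F)·H(F)·Tan(F)ᵀ|/|∇F|³`. -/
theorem curvature_regular_point_implicit_curve
    (F : ℝ × ℝ → ℝ) (hF : ContDiff ℝ 2 F)
    (P : ℝ × ℝ) (hgrad : fderiv ℝ F P ≠ 0)
    (Fx Fy Fxx Fxy Fyy : ℝ)
    (hFx : Fx = fderiv ℝ F P (1, 0))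
    (hFy : Fy = fderiv ℝ F P (0, 1))
    (hFxx : Fxx = fderiv ℝ (fun p => fderiv ℝ F p (1, 0)) P (1, 0))
    (hFxy : Fxy = fderiv ℝ (fun p => fderiv ℝ F p (0, 1)) P (1, 0))
    (hFyy : Fyy = fderiv ℝ (fun p => fderiv ℝ F p (0, 1)) P (0, 1))
    (w : ℝ × ℝ)
    (r : ℝ → ℝ × ℝ)
    (hr : r = fun t => P + t • ((-Fy, Fx) : ℝ × ℝ) + (t ^ 2 / 2) • w)
    (hC2 : deriv (deriv (fun t => F (r t))) 0 = 0) :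
    |(-Fy) * w.2 - w.1 * Fx| / (Fx ^ 2 + Fy ^ 2) ^ ((3 : ℝ) / 2)
      = |Fxx * Fy ^ 2 - 2 * Fxy * Fx * Fy + Fyy * Fx ^ 2|
          / (Fx ^ 2 + Fy ^ 2) ^ ((3 : ℝ) / 2) :=
  curvature_regular_point_implicit_curve_general F hF P Fx Fy Fxx Fxy Fyy hFx hFy hFxx hFxy hFyy w r
    hr hC2
end

section
/- Let H be a symmetric 3×3 real matrix, let r_s, r_t, r_ss, r_st, r_tt ∈ ℝ³, set g = r_s ×₃ r_t, and assume g ≠ 0. Assume r_ss·g = −r_sᵀHr_s, r_st·g = −r_sᵀHr_t, and r_tt·g = −r_tᵀHr_t. Define E = r_s·r_s, F = r_s·r_t, G = r_t·r_t, n = g/‖g‖, L = r_ss·n, M = r_st·n, N = r_tt·n. Then (L·N − M²)/(E·G − F²) = (gᵀ · adj(H) · g)/‖g‖⁴. -/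
open Matrix

/-!
Two classical identities in `ℝ³` do the work. Lagrange's identity
`(rs·rs)(rt·rt) − (rs·rt)² = ‖rs × rt‖²` identifies `EG − F²` with `‖g‖²`. For the numerator,
`(Au) × (Av) = adj(A)ᵀ (u × v)` together with the same quadruple-product identity turns
`(g · adj H · g)` into `(rsᵀH rs)(rtᵀH rt) − (rsᵀH rt)²`, which the contact conditions identify
with `‖g‖² (LN − M²)`.
-/

theorem cross_mulVec_mulVec {R : Type*} [CommRing R] (A : Matrix (Fin 3) (Fin 3) R)
    (u v : Fin 3 → R) : (A *ᵥ u) ⨯₃ (A *ᵥ v) = A.adjugateᵀ *ᵥ (u ⨯₃ v) := by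
  ext i
  fin_cases i <;>
  simp [cross_apply, adjugate_fin_three, mulVec, dotProduct, Fin.sum_univ_three] <;> ring

theorem Matrix.IsSymm.dotProduct_mulVec_comm {R n : Type*} [CommSemiring R] [Fintype n]
    {A : Matrix n n R} (hA : A.IsSymm) (u v : n → R) : u ⬝ᵥ A *ᵥ v = v ⬝ᵥ A *ᵥ u := by
  rw [dotProduct_mulVec, ← mulVec_transpose, hA.eq, dotProduct_comm]

theorem Matrix.IsSymm.cross_dotProduct_adjugate_mulVec_cross {R : Type*} [CommRing R]
    {A : Matrix (Fin 3) (Fin 3) R} (hA : A.IsSymm) (u v : Fin 3 → R) :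
    (u ⨯₃ v) ⬝ᵥ A.adjugate *ᵥ (u ⨯₃ v)
      = (u ⬝ᵥ A *ᵥ u) * (v ⬝ᵥ A *ᵥ v) - (u ⬝ᵥ A *ᵥ v) ^ 2 := by
  rw [← hA.adjugate.eq, ← cross_mulVec_mulVec, cross_dot_cross, hA.dotProduct_mulVec_comm v u]
  ring

theorem gauss_curvature_regular_point_implicit_surface_general
    (H : Matrix (Fin 3) (Fin 3) ℝ) (hH : H.IsSymm)
    (rs rt rss rst rtt : Fin 3 → ℝ)
    (g : Fin 3 → ℝ) (hg : g = rs ⨯₃ rt)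
    (hss : rss ⬝ᵥ g = -(rs ⬝ᵥ H *ᵥ rs))
    (hst : rst ⬝ᵥ g = -(rs ⬝ᵥ H *ᵥ rt))
    (htt : rtt ⬝ᵥ g = -(rt ⬝ᵥ H *ᵥ rt))
    (E F G L M N : ℝ) (n : Fin 3 → ℝ)
    (hE : E = rs ⬝ᵥ rs) (hF : F = rs ⬝ᵥ rt) (hG : G = rt ⬝ᵥ rt)
    (hn : n = (Real.sqrt (g ⬝ᵥ g))⁻¹ • g)
    (hL : L = rss ⬝ᵥ n) (hM : M = rst ⬝ᵥ n) (hN : N = rtt ⬝ᵥ n) :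
    (L * N - M ^ 2) / (E * G - F ^ 2)
      = (g ⬝ᵥ H.adjugate *ᵥ g) / (Real.sqrt (g ⬝ᵥ g)) ^ 4 := by
  have hsq : Real.sqrt (g ⬝ᵥ g) ^ 2 = g ⬝ᵥ g := Real.sq_sqrt (by
    simpa using dotProduct_star_self_nonneg g)
  have hfirst : E * G - F ^ 2 = g ⬝ᵥ g := by
    rw [hE, hF, hG, hg, cross_dot_cross, dotProduct_comm rt rs]
    ring
  have hsecond : L * N - M ^ 2
      = ((rss ⬝ᵥ g) * (rtt ⬝ᵥ g) - (rst ⬝ᵥ g) ^ 2) / Real.sqrt (g ⬝ᵥ g) ^ 2 := by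
    rw [hL, hM, hN, hn]
    simp only [dotProduct_smul, smul_eq_mul]
    ring
  have hgoldman : g ⬝ᵥ H.adjugate *ᵥ g
      = (rs ⬝ᵥ H *ᵥ rs) * (rt ⬝ᵥ H *ᵥ rt) - (rs ⬝ᵥ H *ᵥ rt) ^ 2 :=
    hg ▸ hH.cross_dotProduct_adjugate_mulVec_cross rs rt
  have hfourth : Real.sqrt (g ⬝ᵥ g) ^ 4 = (g ⬝ᵥ g) ^ 2 := by
    rw [show 4 = 2 * 2 from rfl, pow_mul, hsq]
  rw [hsecond, hfirst, hgoldman, hss, hst, htt, hfourth, hsq]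
  ring

/-- Gauss-curvature part of Theorem 2 of the paper: a quadratic parametric
surface with second-order contact with an implicit surface at a regular point
(gradient `g`, Hessian `H`) has Gauss curvature `(LN − M²)/(EG − F²)` equal to
Goldman's formula `(g · adj(H) · g)/‖g‖⁴`. -/
theorem gauss_curvature_regular_point_implicit_surface
    (H : Matrix (Fin 3) (Fin 3) ℝ) (hH : H.IsSymm)
    (rs rt rss rst rtt : Fin 3 → ℝ)
    (g : Fin 3 → ℝ) (hg : g = rs ⨯₃ rt) (hg0 : g ≠ 0)
    (hss : rss ⬝ᵥ g = -(rs ⬝ᵥ H *ᵥ rs))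
    (hst : rst ⬝ᵥ g = -(rs ⬝ᵥ H *ᵥ rt))
    (htt : rtt ⬝ᵥ g = -(rt ⬝ᵥ H *ᵥ rt))
    (E F G L M N : ℝ) (n : Fin 3 → ℝ)
    (hE : E = rs ⬝ᵥ rs) (hF : F = rs ⬝ᵥ rt) (hG : G = rt ⬝ᵥ rt)
    (hn : n = (Real.sqrt (g ⬝ᵥ g))⁻¹ • g)
    (hL : L = rss ⬝ᵥ n) (hM : M = rst ⬝ᵥ n) (hN : N = rtt ⬝ᵥ n) :
    (L * N - M ^ 2) / (E * G - F ^ 2)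
      = (g ⬝ᵥ H.adjugate *ᵥ g) / (Real.sqrt (g ⬝ᵥ g)) ^ 4 :=
  gauss_curvature_regular_point_implicit_surface_general H hH rs rt rss rst rtt g hg hss hst htt E F
    G L M N n hE hF hG hn hL hM hN
end

section
/- Let H be a symmetric 3×3 real matrix and let u, v ∈ ℝ³. Then (u·u)·(vᵀHv) − 2·(u·v)·(uᵀHv) + (v·v)·(uᵀHu) = tr(H)·‖u ×₃ v‖² − (u ×₃ v)ᵀ · H · (u ×₃ v). -/
/-!
For every `3 × 3` matrix `M`, `(M u) × v + u × (M v) = (tr M · 1 - Mᵀ)(u × v)`; for skew `M`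
this is the statement that `M` acts on `ℝ³` as a derivation of the cross product. Dotting this
with `u × v` and expanding the two scalar quadruple products `(u × v) · ((H u) × v)` and
`(u × v) · (u × (H v))` by the Binet–Cauchy identity gives the numerator on the left; symmetry
of `H` identifies `v · H u` with `u · H v` there and `Hᵀ` with `H` on the right.
-/

open Matrix

theorem mulVec_cross_add_cross_mulVec {R : Type*} [CommRing R] (M : Matrix (Fin 3) (Fin 3) R)
    (u v : Fin 3 → R) :
    (M *ᵥ u) ⨯₃ v + u ⨯₃ (M *ᵥ v) = (M.trace • 1 - Mᵀ) *ᵥ (u ⨯₃ v) := by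
  ext i
  fin_cases i <;>
    simp [cross_apply, mulVec, dotProduct, trace, Fin.sum_univ_three] <;> ring

/-- Algebraic core of the `EN − 2FM + GL` computation in Theorem 2 of the
paper: the mean-curvature numerator reduces to the quadratic form of `H` at
the normal `u × v` and the trace of `H`. -/
theorem mean_curvature_numerator_identity
    (H : Matrix (Fin 3) (Fin 3) ℝ) (hH : H.IsSymm) (u v : Fin 3 → ℝ) :
    (u ⬝ᵥ u) * (v ⬝ᵥ H *ᵥ v) - 2 * (u ⬝ᵥ v) * (u ⬝ᵥ H *ᵥ v)
        + (v ⬝ᵥ v) * (u ⬝ᵥ H *ᵥ u)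
      = H.trace * ((u ⨯₃ v) ⬝ᵥ (u ⨯₃ v)) - (u ⨯₃ v) ⬝ᵥ H *ᵥ (u ⨯₃ v) := by
  have hvu : v ⬝ᵥ H *ᵥ u = u ⬝ᵥ H *ᵥ v := by
    rw [dotProduct_mulVec, ← mulVec_transpose, hH.eq, dotProduct_comm]
  calc (u ⬝ᵥ u) * (v ⬝ᵥ H *ᵥ v) - 2 * (u ⬝ᵥ v) * (u ⬝ᵥ H *ᵥ v) + (v ⬝ᵥ v) * (u ⬝ᵥ H *ᵥ u)
      = u ⨯₃ v ⬝ᵥ (H *ᵥ u) ⨯₃ v + u ⨯₃ v ⬝ᵥ u ⨯₃ (H *ᵥ v) := by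
        rw [cross_dot_cross, cross_dot_cross, hvu, dotProduct_comm v u]
        ring
    _ = u ⨯₃ v ⬝ᵥ (H.trace • 1 - Hᵀ) *ᵥ (u ⨯₃ v) := by
        rw [← dotProduct_add, mulVec_cross_add_cross_mulVec]
    _ = H.trace * ((u ⨯₃ v) ⬝ᵥ (u ⨯₃ v)) - (u ⨯₃ v) ⬝ᵥ H *ᵥ (u ⨯₃ v) := by
        rw [hH.eq, sub_mulVec, smul_mulVec, one_mulVec, dotProduct_sub, dotProduct_smul,
          smul_eq_mul]
end

section
/- Let A and B be symmetric 3×3 real matrices, let f, g ∈ ℝ³, and set u = f ×₃ g. Let M be the 3×3 real matrix whose i-th column is (A·e_i) ×₃ g − (B·e_i) ×₃ f, where e_1, e_2, e_3 is the standard basis of ℝ³. Then Mᵀ·f = −A·u and Mᵀ·g = −B·u; consequently the vector r″ := M·u satisfies r″·f = −uᵀAu and r″·g = −uᵀBu. -/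
/-!
Writing `[v]×` for the matrix of `w ↦ v ×₃ w`, the `j`-th column of `M` is
`f ×₃ B eⱼ − g ×₃ A eⱼ`, so `M = [f]× B − [g]× A`. Since `[v]×` is skew-symmetric and `A`, `B`
are symmetric, `Mᵀ = A [g]× − B [f]×`; applied to `f` and `g` one term dies by `v ×₃ v = 0`,
leaving `Mᵀ f = A (g ×₃ f) = −A u` and `Mᵀ g = −B (f ×₃ g) = −B u`. The contact conditions
follow from `(M u) ⬝ᵥ f = u ⬝ᵥ Mᵀ f`.
-/

open Matrix

section CrossMatrix

variable {R : Type*} [CommRing R]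

def crossMatrix (v : Fin 3 → R) : Matrix (Fin 3) (Fin 3) R :=
  LinearMap.toMatrix' (crossProduct v)

lemma crossMatrix_mulVec (v w : Fin 3 → R) : crossMatrix v *ᵥ w = v ⨯₃ w :=
  LinearMap.toMatrix'_mulVec _ _

lemma mul_crossMatrix_mulVec (A : Matrix (Fin 3) (Fin 3) R) (v w : Fin 3 → R) :
    (A * crossMatrix v) *ᵥ w = A *ᵥ (v ⨯₃ w) := by
  rw [← mulVec_mulVec, crossMatrix_mulVec]

lemma crossMatrix_transpose (v : Fin 3 → R) : (crossMatrix v)ᵀ = -crossMatrix v := by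
  ext i j
  fin_cases i <;> fin_cases j <;> simp [crossMatrix, LinearMap.toMatrix'_apply, cross_apply]

lemma of_cross_sub_cross_eq (A B : Matrix (Fin 3) (Fin 3) R) (f g : Fin 3 → R) :
    of (fun i j => ((A *ᵥ Pi.single j 1) ⨯₃ g - (B *ᵥ Pi.single j 1) ⨯₃ f) i) =
      crossMatrix f * B - crossMatrix g * A := by
  ext i j
  rw [of_apply, ← col_apply (crossMatrix f * B - crossMatrix g * A), ← mulVec_single_one,
    sub_mulVec, ← mulVec_mulVec, ← mulVec_mulVec, crossMatrix_mulVec,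
    crossMatrix_mulVec, ← cross_anticomm g, ← cross_anticomm f, neg_sub_neg]

lemma transpose_crossMatrix_mul_sub {A B : Matrix (Fin 3) (Fin 3) R} (hA : A.IsSymm)
    (hB : B.IsSymm) (f g : Fin 3 → R) :
    (crossMatrix f * B - crossMatrix g * A)ᵀ = A * crossMatrix g - B * crossMatrix f := by
  rw [transpose_sub, transpose_mul, transpose_mul, hA.eq, hB.eq, crossMatrix_transpose,
    crossMatrix_transpose, mul_neg, mul_neg, neg_sub_neg]

end CrossMatrix

/-- Key lemma in the proof of Theorem 3 of the paper: for the matrix `M` whose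
`i`-th column is `(A·eᵢ) × g − (B·eᵢ) × f` (the paper's
`∇(∇F×∇G) = H(F)×∇G − H(G)×∇F`), one has `Mᵀ·f = −A·u` and `Mᵀ·g = −B·u` with
`u = f × g`; consequently `r″ = M·u` satisfies the second-order contact
conditions `r″·f = −uᵀAu` and `r″·g = −uᵀBu`. -/
theorem grad_cross_matrix_contact_conditions
    (A B : Matrix (Fin 3) (Fin 3) ℝ) (hA : A.IsSymm) (hB : B.IsSymm)
    (f g : Fin 3 → ℝ) (u : Fin 3 → ℝ) (hu : u = f ⨯₃ g)
    (M : Matrix (Fin 3) (Fin 3) ℝ)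
    (hM : M = Matrix.of fun i j =>
      ((A *ᵥ Pi.single j 1) ⨯₃ g - (B *ᵥ Pi.single j 1) ⨯₃ f) i) :
    Mᵀ *ᵥ f = -(A *ᵥ u) ∧ Mᵀ *ᵥ g = -(B *ᵥ u) ∧
      (M *ᵥ u) ⬝ᵥ f = -(u ⬝ᵥ A *ᵥ u) ∧ (M *ᵥ u) ⬝ᵥ g = -(u ⬝ᵥ B *ᵥ u) := by
  have hMt : Mᵀ = A * crossMatrix g - B * crossMatrix f := by
    rw [hM, of_cross_sub_cross_eq, transpose_crossMatrix_mul_sub hA hB]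
  have hf : Mᵀ *ᵥ f = -(A *ᵥ u) := by
    rw [hMt, sub_mulVec, mul_crossMatrix_mulVec, mul_crossMatrix_mulVec, cross_self, mulVec_zero,
      sub_zero, ← cross_anticomm, mulVec_neg, hu]
  have hg : Mᵀ *ᵥ g = -(B *ᵥ u) := by
    rw [hMt, sub_mulVec, mul_crossMatrix_mulVec, mul_crossMatrix_mulVec, cross_self, mulVec_zero,
      zero_sub, hu]
  refine ⟨hf, hg, ?_, ?_⟩
  · rw [dotProduct_comm, ← dotProduct_transpose_mulVec, hf, dotProduct_neg]
  · rw [dotProduct_comm, ← dotProduct_transpose_mulVec, hg, dotProduct_neg]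
end
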